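/- The distance from the center of curvature to each tangential line equals the radius: under the construction of the center point C from three non-collinear points P₋, P, P₊ and radius r > 0 (with θ the angle between U = P₋ − P and V = P₊ − P, l_t = r/tan(θ/2), l_x = l_t/cos(θ/2), C = P + l_x·(Q − P)/‖Q − P‖, Q = P₋ + (‖U‖·‖W‖/(‖U‖ + ‖V‖))·W/‖W‖, W = P₊ − P₋), the infimum distance from C to the line through P and P₋ equals r, and the infimum distance from C to the line through P and P₊ equals r. -/

import Mathlib

/-!
`Q` is the foot of the bisector of the angle at `P` (it divides `P₋P₊` in the ratio
`‖U‖ : ‖V‖`), so `Q - P` is a positive multiple of `‖V‖ • U + ‖U‖ • V`, which makes the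
angle `θ / 2` with both `U` and `V`. Hence `C` lies on the bisector at distance
`l_x = r / sin (θ / 2)` from `P`, and its distance to either side is
`l_x * sin (θ / 2) = r`.
-/

open scoped RealInnerProductSpace EuclideanGeometry
open InnerProductGeometry Real

section Normed

variable {E : Type*} [NormedAddCommGroup E] [NormedSpace ℝ E]

/-- `(‖x‖ * ‖y‖) • (x / ‖x‖ + y / ‖y‖)`: a direction of the internal bisector of the angle
between `x` and `y`, scaled to avoid division. -/
def angleBisector (x y : E) : E := ‖y‖ • x + ‖x‖ • y

theorem angleBisector_comm (x y : E) : angleBisector x y = angleBisector y x :=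
  add_comm _ _

theorem angleBisector_ne_zero {x y : E} (h : LinearIndependent ℝ ![x, y]) :
    angleBisector x y ≠ 0 := fun hb ↦ h.ne_zero 1 <| by
  simpa using (LinearIndependent.pair_iff.1 h _ _ hb).1

theorem add_smul_normalize_sub_eq_smul_angleBisector {x y : E} (h : x ≠ y) :
    x + (‖x‖ * ‖y - x‖ / (‖x‖ + ‖y‖)) • (‖y - x‖⁻¹ • (y - x)) =
      (‖x‖ + ‖y‖)⁻¹ • angleBisector x y := by
  have hyx : 0 < ‖y - x‖ := norm_pos_iff.2 (sub_ne_zero.2 h.symm)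
  have hxy : 0 < ‖x‖ + ‖y‖ := by linarith [norm_sub_le y x]
  rw [angleBisector, smul_smul]
  match_scalars <;> field_simp
  ring

end Normed

section Inner

variable {V : Type*} [NormedAddCommGroup V] [InnerProductSpace ℝ V]

theorem angle_mem_Ioo_of_linearIndependent {x y : V} (h : LinearIndependent ℝ ![x, y]) :
    angle x y ∈ Set.Ioo 0 π := by
  have hy : ∀ r : ℝ, y ≠ r • x := fun r hr ↦ by
    simpa using (LinearIndependent.pair_iff.1 h r (-1) (by simp [hr])).2
  refine ⟨(angle_nonneg x y).lt_of_ne' fun h0 ↦ ?_, (angle_le_pi x y).lt_of_ne fun hπ ↦ ?_⟩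
  · obtain ⟨-, r, -, hr⟩ := angle_eq_zero_iff.1 h0
    exact hy r hr
  · obtain ⟨-, r, -, hr⟩ := angle_eq_pi_iff.1 hπ
    exact hy r hr

theorem angle_angleBisector_left {x y : V} (h : angleBisector x y ≠ 0) :
    angle (angleBisector x y) x = angle x y / 2 := by
  rw [angleBisector] at h ⊢
  have hx : 0 < ‖x‖ := norm_pos_iff.2 fun hx ↦ h (by simp [hx])
  have hy : 0 < ‖y‖ := norm_pos_iff.2 fun hy ↦ h (by simp [hy])
  have hbx : ⟪‖y‖ • x + ‖x‖ • y, x⟫ = ‖x‖ * (‖x‖ * ‖y‖ + ⟪x, y⟫) := by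
    rw [inner_add_left, real_inner_smul_left, real_inner_smul_left,
      real_inner_self_eq_norm_sq, real_inner_comm]
    ring
  have hbb : ‖‖y‖ • x + ‖x‖ • y‖ ^ 2 = 2 * (‖x‖ * ‖y‖) * (‖x‖ * ‖y‖ + ⟪x, y⟫) := by
    rw [norm_add_sq_real, norm_smul, norm_smul, norm_norm, norm_norm, real_inner_smul_left,
      real_inner_smul_right]
    ring
  have hs : 0 < ‖x‖ * ‖y‖ + ⟪x, y⟫ := by
    refine lt_of_le_of_ne ?_ fun hs ↦ h ?_
    · linarith [neg_le_of_abs_le (abs_real_inner_le_norm x y)]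
    · rw [← norm_eq_zero, ← sq_eq_zero_iff, hbb, ← hs, mul_zero]
  have hb : 0 < ‖‖y‖ • x + ‖x‖ • y‖ := norm_pos_iff.2 h
  apply injOn_cos ⟨angle_nonneg _ _, angle_le_pi _ _⟩
    ⟨by linarith [angle_nonneg x y], by linarith [angle_le_pi x y, pi_pos]⟩
  rw [cos_angle, cos_half (by linarith [angle_nonneg x y, pi_pos]) (angle_le_pi _ _),
    cos_angle, eq_comm, sqrt_eq_iff_mul_self_eq_of_pos (by rw [hbx]; positivity)]
  field_simp
  rw [hbx, hbb]
  ring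

theorem angle_angleBisector_right {x y : V} (h : angleBisector x y ≠ 0) :
    angle (angleBisector x y) y = angle x y / 2 := by
  rw [angleBisector_comm] at h ⊢
  rw [angle_angleBisector_left h, angle_comm]

end Inner

section Affine

variable {V P : Type*} [NormedAddCommGroup V] [InnerProductSpace ℝ V] [MetricSpace P]
  [NormedAddTorsor V P]

theorem infDist_affineSpan_pair_eq_dist_mul_sin_angle {p₁ p₂ : P} (h : p₁ ≠ p₂) (p : P) :
    Metric.infDist p (line[ℝ, p₁, p₂]) = dist p p₁ * sin (∠ p p₁ p₂) := by
  set w := p -ᵥ p₁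
  set u := p₂ -ᵥ p₁
  have hu : ‖u‖ ≠ 0 := norm_ne_zero_iff.2 (vsub_ne_zero.2 h.symm)
  set t := ⟪w, u⟫ / ‖u‖ ^ 2
  have horth : ⟪u, w - t • u⟫ = 0 := by
    rw [inner_sub_right, real_inner_smul_right, real_inner_self_eq_norm_sq, real_inner_comm,
      div_mul_cancel₀ _ (pow_ne_zero 2 hu), sub_self]
  have hproj :
      (EuclideanGeometry.orthogonalProjection line[ℝ, p₁, p₂] p : P) = t • u +ᵥ p₁ := by
    refine EuclideanGeometry.coe_orthogonalProjection_eq_iff_mem.2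
      ⟨AffineMap.lineMap_mem_affineSpan_pair t p₁ p₂, ?_⟩
    rw [direction_affineSpan, vectorSpan_pair_rev,
      Submodule.mem_orthogonal_singleton_iff_inner_right, vsub_vadd_eq_vsub_sub]
    exact horth
  have hperp : ‖w - t • u‖ ^ 2 = ‖w‖ ^ 2 - t * ⟪w, u⟫ := by
    rw [← real_inner_self_eq_norm_sq, inner_sub_left, real_inner_smul_left, horth,
      inner_sub_right, real_inner_self_eq_norm_sq, real_inner_smul_right]
    ring
  have hsq : (‖w - t • u‖ * ‖u‖) ^ 2 = (sin (angle w u) * (‖w‖ * ‖u‖)) ^ 2 := by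
    rw [sin_angle_mul_norm_mul_norm,
      sq_sqrt (sub_nonneg.2 (real_inner_mul_inner_self_le w u)), real_inner_self_eq_norm_sq,
      real_inner_self_eq_norm_sq, mul_pow, hperp]
    simp only [t]
    field_simp
  rw [← EuclideanGeometry.dist_orthogonalProjection_eq_infDist, hproj, dist_eq_norm_vsub V,
    dist_eq_norm_vsub V, vsub_vadd_eq_vsub_sub, EuclideanGeometry.angle]
  rw [pow_left_inj₀ (by positivity) (by positivity [sin_angle_nonneg w u]) two_ne_zero,
    mul_left_comm, ← mul_assoc] at hsq
  exact mul_right_cancel₀ hu hsq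

theorem infDist_affineSpan_pair_of_vsub_eq_smul_angleBisector {p p₁ p₂ c : P} {k : ℝ}
    (hk : 0 < k) (h : angleBisector (p₁ -ᵥ p) (p₂ -ᵥ p) ≠ 0)
    (hc : c -ᵥ p = k • angleBisector (p₁ -ᵥ p) (p₂ -ᵥ p)) :
    Metric.infDist c (line[ℝ, p, p₁]) = dist c p * sin (∠ p₁ p p₂ / 2) ∧
      Metric.infDist c (line[ℝ, p, p₂]) = dist c p * sin (∠ p₁ p p₂ / 2) := by
  have hp₁ : p ≠ p₁ := fun hp ↦ h (by simp [angleBisector, ← hp])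
  have hp₂ : p ≠ p₂ := fun hp ↦ h (by simp [angleBisector, ← hp])
  rw [infDist_affineSpan_pair_eq_dist_mul_sin_angle hp₁,
    infDist_affineSpan_pair_eq_dist_mul_sin_angle hp₂]
  simp only [EuclideanGeometry.angle, hc, angle_smul_left_of_pos _ _ hk,
    angle_angleBisector_left h, angle_angleBisector_right h, and_self]

end Affine

theorem div_tan_div_cos (r : ℝ) {φ : ℝ} (h : cos φ ≠ 0) :
    r / tan φ / cos φ = r / sin φ := by
  rw [tan_eq_sin_div_cos]
  field_simp

/-- the infimum distance from the constructed center of curvature `C` to the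
line through `P` and `P₋`, and to the line through `P` and `P₊`, both equal the radius `r`. -/
theorem infDist_center_to_tangential_lines
    (Pm P Pp : EuclideanSpace ℝ (Fin 2))
    (U V W : EuclideanSpace ℝ (Fin 2))
    (hU : U = Pm - P) (hV : V = Pp - P) (hW : W = Pp - Pm)
    (hLI : LinearIndependent ℝ ![U, V])
    (θ : ℝ) (hθ : θ = Real.arccos (⟪U, V⟫ / (‖U‖ * ‖V‖)))
    (r : ℝ) (hr : 0 < r)
    (lt lx : ℝ) (hlt : lt = r / Real.tan (θ / 2)) (hlx : lx = lt / Real.cos (θ / 2))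
    (lb : ℝ) (hlb : lb = ‖U‖ * ‖W‖ / (‖U‖ + ‖V‖))
    (Q : EuclideanSpace ℝ (Fin 2)) (hQ : Q = Pm + lb • (‖W‖⁻¹ • W))
    (C : EuclideanSpace ℝ (Fin 2))
    (hC : C = P + lx • (‖Q - P‖⁻¹ • (Q - P))) :
    Metric.infDist C ((affineSpan ℝ ({P, Pm} : Set (EuclideanSpace ℝ (Fin 2)))) :
        Set (EuclideanSpace ℝ (Fin 2))) = r ∧
    Metric.infDist C ((affineSpan ℝ ({P, Pp} : Set (EuclideanSpace ℝ (Fin 2)))) :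
        Set (EuclideanSpace ℝ (Fin 2))) = r := by
  obtain ⟨hθ0, hθπ⟩ : θ ∈ Set.Ioo 0 π := hθ ▸ angle_mem_Ioo_of_linearIndependent hLI
  have hsin : 0 < sin (θ / 2) := sin_pos_of_pos_of_lt_pi (by linarith) (by linarith)
  have hlx' : lx = r / sin (θ / 2) := by
    rw [hlx, hlt, div_tan_div_cos _ (cos_pos_of_mem_Ioo ⟨by linarith, by linarith⟩).ne']
  have hB : angleBisector U V ≠ 0 := angleBisector_ne_zero hLI
  have hUV : 0 < ‖U‖ + ‖V‖ :=
    add_pos_of_pos_of_nonneg (norm_pos_iff.2 (hLI.ne_zero 0)) (norm_nonneg V)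
  have hQP : Q - P = (‖U‖ + ‖V‖)⁻¹ • angleBisector U V := by
    rw [← add_smul_normalize_sub_eq_smul_angleBisector (x := U) (y := V)
      (hLI.injective.ne zero_ne_one), hQ, hlb, hW, hU, hV, sub_sub_sub_cancel_right]
    abel
  have hQP0 : ‖Q - P‖ ≠ 0 := by
    rw [hQP, norm_ne_zero_iff]
    exact smul_ne_zero (by positivity) hB
  have hCP :
      C -ᵥ P = (lx * ‖Q - P‖⁻¹ * (‖U‖ + ‖V‖)⁻¹) • angleBisector (Pm -ᵥ P) (Pp -ᵥ P) := by
    rw [vsub_eq_sub, hC, add_sub_cancel_left, smul_smul, hQP, smul_smul, vsub_eq_sub,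
      vsub_eq_sub, ← hU, ← hV]
  have hdist : dist C P = lx := by
    rw [dist_eq_norm, hC, add_sub_cancel_left, norm_smul, norm_smul, norm_inv, norm_norm,
      inv_mul_cancel₀ hQP0, mul_one, norm_of_nonneg (by rw [hlx']; positivity)]
  have hθ' : ∠ Pm P Pp = θ := by
    rw [hθ, EuclideanGeometry.angle, vsub_eq_sub, vsub_eq_sub, ← hU, ← hV]
    rfl
  obtain ⟨hm, hp⟩ := infDist_affineSpan_pair_of_vsub_eq_smul_angleBisector
    (by rw [hlx']; positivity) (by simpa [← hU, ← hV] using hB) hCP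
  rw [hdist, hθ', hlx', div_mul_cancel₀ _ hsin.ne'] at hm hp
  exact ⟨hm, hp⟩
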